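/- arXiv:2004.07306 — 5 statements merged into one kernel-verified Lean document; each statement's English description precedes it below -/
import Mathlib

section
/- The centralizer of Q in SU(2) equals {1, −1} (the identity matrix and its negative), and this set also equals the center of Q. In particular the centralizer of Q in SU(2) is contained in Q. -/
/-! A matrix commuting with `j = diag(I, -I)` is diagonal because `I ≠ -I`, and commuting with
`i` forces its two diagonal entries to agree; so the centralizer of `Q` consists of scalars `a • 1`
with `a² = det = 1`, i.e. of `±1`. Both lie in `Q` (as `-1 = i²`) and are central in `SU(2)`. -/

open Matrix Complex

noncomputable section

/-- The special unitary group over a star ring is a group (inverse = conjugate transpose). -/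
instance grpSU {n : Type*} [DecidableEq n] [Fintype n] {α : Type*} [CommRing α] [StarRing α] :
    Group ↥(Matrix.specialUnitaryGroup n α) :=
  { (inferInstance : Monoid ↥(Matrix.specialUnitaryGroup n α)) with
    inv := fun A => ⟨star A.1, by
      rw [Matrix.mem_specialUnitaryGroup_iff]
      refine ⟨Unitary.star_mem A.2.1, ?_⟩
      have hdet : A.1.det = 1 := A.2.2
      rw [Matrix.star_eq_conjTranspose, Matrix.det_conjTranspose, hdet, star_one]⟩
    inv_mul_cancel := fun A => Subtype.ext A.2.1.1 }

/-- `SU(2)`, the special unitary group of `2 × 2` complex matrices. -/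
abbrev SU2 := Matrix.specialUnitaryGroup (Fin 2) ℂ

lemma mem_su2 (a b : ℂ) (h : a * (starRingEnd ℂ) a + b * (starRingEnd ℂ) b = 1) :
    !![a, b; -((starRingEnd ℂ) b), (starRingEnd ℂ) a] ∈ Matrix.specialUnitaryGroup (Fin 2) ℂ := by
  rw [Matrix.mem_specialUnitaryGroup_iff]
  constructor
  · rw [Matrix.mem_unitaryGroup_iff]
    ext i j
    fin_cases i <;> fin_cases j <;>
      simp [Matrix.mul_apply, Fin.sum_univ_two, Matrix.star_eq_conjTranspose,
        Matrix.conjTranspose_apply, Matrix.one_apply] <;>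
      first
      | ring1
      | linear_combination h
  · show Matrix.det _ = 1
    rw [Matrix.det_fin_two_of]
    linear_combination h

/-- The element `w = [[0,1],[-1,0]]` of `SU(2)`. -/
def w : SU2 := ⟨!![0, 1; -1, 0], by
  have h := mem_su2 0 1 (by norm_num)
  simp only [map_zero, _root_.map_one] at h
  exact h⟩

/-- The element `j = [[I,0],[0,-I]]` of `SU(2)`. -/
def jmat : SU2 := ⟨!![Complex.I, 0; 0, -Complex.I], by
  have h := mem_su2 Complex.I 0 (by simp [Complex.conj_I, Complex.I_mul_I])
  simp only [map_zero, neg_zero, Complex.conj_I] at h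
  exact h⟩

/-- The negative of the identity matrix, as an element of `SU(2)`. -/
def negOne : SU2 := ⟨!![-1, 0; 0, -1], by
  have h := mem_su2 (-1) 0 (by norm_num)
  simp only [map_zero, neg_zero, map_neg, _root_.map_one] at h
  exact h⟩

/-- The quaternion subgroup `Q` of `SU(2)`, generated by `i = [[0,1],[-1,0]]` and
`j = [[I,0],[0,-I]]`. -/
def Q : Subgroup SU2 := Subgroup.closure {w, jmat}

theorem Matrix.eq_smul_one_of_commute_fin_two {R : Type*} [CommRing R] [NoZeroDivisors R]
    {A : Matrix (Fin 2) (Fin 2) R} {c : R} (hc : c ≠ -c)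
    (hw : Commute !![0, 1; -1, 0] A) (hd : Commute !![c, 0; 0, -c] A) : A = A 0 0 • 1 := by
  have entry {B : Matrix (Fin 2) (Fin 2) R} (h : Commute B A) (i j : Fin 2) :
      ∑ k, B i k * A k j = ∑ k, A i k * B k j := by
    simpa only [mul_apply] using congr_fun₂ h.eq i j
  have hsub : c - -c ≠ 0 := sub_ne_zero.2 hc
  have h01 : A 0 1 = 0 := by
    refine (mul_eq_zero.1 ?_).resolve_left hsub
    linear_combination (by simpa using entry hd 0 1 : c * A 0 1 = A 0 1 * -c)
  have h10 : A 1 0 = 0 := by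
    refine (mul_eq_zero.1 ?_).resolve_left hsub
    linear_combination -(by simpa using entry hd 1 0 : -(c * A 1 0) = A 1 0 * c)
  have h11 : A 1 1 = A 0 0 := by simpa using entry hw 0 1
  ext i j
  fin_cases i <;> fin_cases j <;> simp [h01, h10, h11]

theorem Matrix.eq_one_or_eq_neg_one_of_eq_smul_one {R : Type*} [CommRing R] [NoZeroDivisors R]
    {A : Matrix (Fin 2) (Fin 2) R} {a : R} (hA : A = a • 1) (hdet : A.det = 1) :
    A = 1 ∨ A = -1 := by
  have ha : a * a = 1 := by simpa [hA, det_smul, sq] using hdet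
  rcases mul_self_eq_one_iff.1 ha with rfl | rfl
  · exact .inl (by simpa using hA)
  · exact .inr (by simpa using hA)

lemma coe_negOne : (negOne : Matrix (Fin 2) (Fin 2) ℂ) = -1 := by
  ext i j
  fin_cases i <;> fin_cases j <;> simp [negOne]

lemma negOne_mem_center : negOne ∈ Subgroup.center SU2 :=
  Subgroup.mem_center_iff.2 fun g => Subtype.ext <| by
    simp [coe_negOne]

lemma eq_one_or_eq_negOne_of_commute {x : SU2} (hw : Commute w x) (hj : Commute jmat x) :
    x = 1 ∨ x = negOne := by
  have hscalar := Matrix.eq_smul_one_of_commute_fin_two (A := x.1) (c := Complex.I)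
    (by norm_num [Complex.ext_iff]) (congrArg Subtype.val hw) (congrArg Subtype.val hj)
  rcases Matrix.eq_one_or_eq_neg_one_of_eq_smul_one hscalar x.2.2 with h | h
  · exact .inl (Subtype.ext h)
  · exact .inr (Subtype.ext (h.trans coe_negOne.symm))

lemma w_mul_w : w * w = negOne := by
  ext i j
  fin_cases i <;> fin_cases j <;> simp [w, negOne]

lemma w_mem_Q : w ∈ Q := Subgroup.subset_closure (by simp)

lemma jmat_mem_Q : jmat ∈ Q := Subgroup.subset_closure (by simp)

lemma negOne_mem_Q : negOne ∈ Q := w_mul_w ▸ Q.mul_mem w_mem_Q w_mem_Q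

lemma coe_centralizer_Q : (Subgroup.centralizer (Q : Set SU2) : Set SU2) = {1, negOne} := by
  ext x
  simp only [SetLike.mem_coe, Set.mem_insert_iff, Set.mem_singleton_iff]
  constructor
  · intro hx
    exact eq_one_or_eq_negOne_of_commute (Subgroup.mem_centralizer_iff.1 hx w w_mem_Q)
      (Subgroup.mem_centralizer_iff.1 hx jmat jmat_mem_Q)
  · rintro (rfl | rfl)
    · exact Subgroup.one_mem _
    · exact Subgroup.center_le_centralizer _ negOne_mem_center

/-- The centralizer of `Q` in `SU(2)` equals `{1, -1}`, which is also the center of `Q`;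
in particular the centralizer of `Q` in `SU(2)` is contained in `Q`. -/
theorem centralizer_of_Q :
    ((Subgroup.centralizer (Q : Set SU2) : Set SU2) = {1, negOne}) ∧
    (({1, negOne} : Set SU2) = {x : SU2 | x ∈ Q ∧ ∀ q ∈ Q, q * x = x * q}) ∧
    Subgroup.centralizer (Q : Set SU2) ≤ Q := by
  have hle : Subgroup.centralizer (Q : Set SU2) ≤ Q := by
    rw [← SetLike.coe_subset_coe, coe_centralizer_Q]
    exact Set.insert_subset_iff.2 ⟨Q.one_mem, Set.singleton_subset_iff.2 negOne_mem_Q⟩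
  refine ⟨coe_centralizer_Q, ?_, hle⟩
  rw [← coe_centralizer_Q]
  ext x
  exact ⟨fun hx => ⟨hle hx, Subgroup.mem_centralizer_iff.1 hx⟩,
    fun hx => Subgroup.mem_centralizer_iff.2 hx.2⟩
end
end

section
/- The normalizer of Q in SU(2) is a finite group of order 48 (it is the binary octahedral group). -/
open Matrix Complex

noncomputable section

/-!
Write `g ∈ SU(2)` as `[[α, β], [-conj β, conj α]]` with `|α|² + |β|² = 1`. Then `Q` consists of the
elements with `(α, β) = (ζ, 0)` or `(0, ζ)`, `ζ ^ 4 = 1`. Since `Q` is finite, `g` normalizes `Q` as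
soon as it conjugates both generators into `Q`, and the parameters of `g w g⁻¹` and `g j g⁻¹` are
explicit quadratic expressions in `α` and `β`. Solving the resulting equations, `g` normalizes `Q`
iff `(α, β)` is `(ζ, 0)` or `(0, ζ)` with `ζ ^ 8 = 1` (16 elements), or `16 α ^ 8 = 1` and
`β ^ 4 = α ^ 4` (32 elements).
-/

open ComplexConjugate

lemma Complex.mul_conj_eq_of_pow_eq {a b : ℂ} {n : ℕ} (hn : n ≠ 0) (h : b ^ n = a ^ n) :
    b * conj b = a * conj a := by
  have hnorm : ‖b‖ ^ n = ‖a‖ ^ n := by rw [← norm_pow, ← norm_pow, h]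
  rw [mul_conj, mul_conj, normSq_eq_norm_sq, normSq_eq_norm_sq,
    (pow_left_inj₀ (norm_nonneg b) (norm_nonneg a) hn).1 hnorm]

theorem Subgroup.mem_normalizer_closure_of_finite {G : Type*} [Group G] {s : Set G}
    [Finite (closure s)] {g : G} (h : ∀ x ∈ s, g * x * g⁻¹ ∈ closure s) :
    g ∈ normalizer (closure s : Set G) := by
  rw [mem_normalizer_iff_map_conj_eq]
  refine eq_of_le_of_card_ge ?_ (card_map_of_injective (MulAut.conj g).injective).ge
  rw [MonoidHom.map_closure, closure_le]
  rintro _ ⟨x, hx, rfl⟩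
  exact h x hx

namespace SU2

def α (g : SU2) : ℂ := g.1 0 0

def β (g : SU2) : ℂ := g.1 0 1

private lemma lower_row_and_norm (g : SU2) :
    g.1 1 0 = -conj (β g) ∧ g.1 1 1 = conj (α g) ∧ α g * conj (α g) + β g * conj (β g) = 1 := by
  obtain ⟨hu, hdet⟩ := mem_specialUnitaryGroup_iff.mp g.2
  rw [mem_unitaryGroup_iff] at hu
  have h00 := congrFun (congrFun hu 0) 0
  have h10 := congrFun (congrFun hu 1) 0
  simp only [mul_apply, Fin.sum_univ_two, star_apply, one_apply, RCLike.star_def] at h00 h10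
  simp only [if_true, Fin.one_eq_zero_iff, OfNat.ofNat_ne_one, if_false] at h00 h10
  rw [det_fin_two] at hdet
  simp only [α, β]
  refine ⟨?_, ?_, h00⟩
  · linear_combination -conj (g.1 0 1) * hdet + g.1 0 0 * h10 - g.1 1 0 * h00
  · linear_combination conj (g.1 0 0) * hdet + g.1 0 1 * h10 - g.1 1 1 * h00

lemma coe_eq (g : SU2) : g.1 = !![α g, β g; -conj (β g), conj (α g)] := by
  obtain ⟨h10, h11, -⟩ := lower_row_and_norm g
  ext i j
  fin_cases i <;> fin_cases j
  exacts [rfl, rfl, h10, h11]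

lemma α_mul_conj_add_β_mul_conj (g : SU2) : α g * conj (α g) + β g * conj (β g) = 1 :=
  (lower_row_and_norm g).2.2

lemma ext_αβ {g h : SU2} (hα : α g = α h) (hβ : β g = β h) : g = h :=
  Subtype.ext <| by rw [coe_eq g, coe_eq h, hα, hβ]

lemma α_mul (g h : SU2) : α (g * h) = α g * α h - β g * conj (β h) := by
  show (g.1 * h.1) 0 0 = _
  rw [coe_eq g, coe_eq h]
  simp [mul_apply, Fin.sum_univ_two, sub_eq_add_neg]

lemma β_mul (g h : SU2) : β (g * h) = α g * β h + β g * conj (α h) := by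
  show (g.1 * h.1) 0 1 = _
  rw [coe_eq g, coe_eq h]
  simp [mul_apply, Fin.sum_univ_two]

lemma α_inv (g : SU2) : α g⁻¹ = conj (α g) := by
  show (star g.1) 0 0 = _
  rw [coe_eq g]
  simp

lemma β_inv (g : SU2) : β g⁻¹ = -β g := by
  show (star g.1) 0 1 = _
  rw [coe_eq g]
  simp

@[simp] lemma α_w : α w = 0 := rfl
@[simp] lemma β_w : β w = 1 := rfl
@[simp] lemma α_jmat : α jmat = I := rfl
@[simp] lemma β_jmat : β jmat = 0 := rfl

def toPair (g : SU2) : ℂ × ℂ := (α g, β g)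

lemma toPair_injective : Function.Injective toPair := fun _ _ h =>
  ext_αβ (congrArg Prod.fst h) (congrArg Prod.snd h)

lemma mem_range_toPair {p : ℂ × ℂ} (h : p.1 * conj p.1 + p.2 * conj p.2 = 1) :
    p ∈ Set.range toPair :=
  ⟨⟨_, mem_su2 p.1 p.2 h⟩, rfl⟩

lemma α_conj_w (g : SU2) : α (g * w * g⁻¹) = α g * conj (β g) - conj (α g) * β g := by
  simp [α_mul, β_mul, α_inv, β_inv]; ring

lemma β_conj_w (g : SU2) : β (g * w * g⁻¹) = α g ^ 2 + β g ^ 2 := by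
  simp [α_mul, β_mul, α_inv, β_inv]; ring

lemma α_conj_jmat (g : SU2) :
    α (g * jmat * g⁻¹) = I * (α g * conj (α g) - β g * conj (β g)) := by
  simp [α_mul, β_mul, α_inv, β_inv]; ring

lemma β_conj_jmat (g : SU2) : β (g * jmat * g⁻¹) = -2 * I * α g * β g := by
  simp [α_mul, β_mul, α_inv, β_inv]; ring

def IsQPair (a b : ℂ) : Prop := (b = 0 ∧ a ^ 4 = 1) ∨ (a = 0 ∧ b ^ 4 = 1)

def qPairSubgroup : Subgroup SU2 where
  carrier := {g | IsQPair (α g) (β g)}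
  one_mem' := Or.inl ⟨rfl, one_pow 4⟩
  mul_mem' := by
    rintro g h (⟨hb, ha⟩ | ⟨ha, hb⟩) (⟨hd, hc⟩ | ⟨hc, hd⟩)
    · exact Or.inl ⟨by simp [β_mul, hb, hd], by simp [α_mul, hd, mul_pow, ha, hc]⟩
    · exact Or.inr ⟨by simp [α_mul, hb, hc], by simp [β_mul, hb, mul_pow, ha, hd]⟩
    · exact Or.inr ⟨by simp [α_mul, ha, hd], by simp [β_mul, ha, mul_pow, hb, ← map_pow, hc]⟩
    · refine Or.inl ⟨by simp [β_mul, ha, hc], ?_⟩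
      rw [α_mul, ha, zero_mul, zero_sub, neg_pow, mul_pow, ← map_pow, hb, hd]
      norm_num
  inv_mem' := by
    rintro g (⟨hb, ha⟩ | ⟨ha, hb⟩)
    · exact Or.inl ⟨by simp [β_inv, hb], by simp [α_inv, ← map_pow, ha]⟩
    · refine Or.inr ⟨by simp [α_inv, ha], ?_⟩
      rw [β_inv, neg_pow, hb]
      norm_num

lemma β_jmat_pow (k : ℕ) : β (jmat ^ k) = 0 := by
  induction k with
  | zero => rfl
  | succ k ih => simp [pow_succ, β_mul, ih]

lemma α_jmat_pow (k : ℕ) : α (jmat ^ k) = I ^ k := by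
  induction k with
  | zero => rfl
  | succ k ih => simp [pow_succ, α_mul, ih]

lemma w_mem_Q : w ∈ Q := Subgroup.subset_closure (by simp)

lemma jmat_mem_Q : jmat ∈ Q := Subgroup.subset_closure (by simp)

lemma mem_Q_iff {g : SU2} : g ∈ Q ↔ IsQPair (α g) (β g) := by
  refine ⟨fun hg => (Subgroup.closure_le qPairSubgroup).2 ?_ hg, fun hg => ?_⟩
  · rw [Set.insert_subset_iff, Set.singleton_subset_iff]
    exact ⟨Or.inr ⟨rfl, one_pow 4⟩, Or.inl ⟨rfl, I_pow_four⟩⟩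
  rcases hg with ⟨hb, ha⟩ | ⟨ha, hb⟩
  · obtain ⟨k, -, hk⟩ := isPrimitiveRoot_I.eq_pow_of_pow_eq_one ha
    have : g = jmat ^ k := ext_αβ (by rw [α_jmat_pow, hk]) (by rw [β_jmat_pow, hb])
    exact this ▸ Subgroup.pow_mem Q jmat_mem_Q k
  · obtain ⟨k, -, hk⟩ := isPrimitiveRoot_I.eq_pow_of_pow_eq_one hb
    have : g = jmat ^ k * w := ext_αβ (by simp [α_mul, β_jmat_pow, ha])
      (by simp [β_mul, α_jmat_pow, β_jmat_pow, hk])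
    exact this ▸ Q.mul_mem (Subgroup.pow_mem Q jmat_mem_Q k) w_mem_Q

lemma finite_Q : (Q : Set SU2).Finite := by
  let T : Finset ℂ := insert 0 (Polynomial.nthRootsFinset 4 (1 : ℂ))
  refine ((T ×ˢ T).finite_toSet.preimage toPair_injective.injOn).subset fun g hg => ?_
  rcases mem_Q_iff.1 hg with ⟨hb, ha⟩ | ⟨ha, hb⟩ <;>
    simp [T, toPair, ha, hb]

lemma mem_normalizer_Q_iff_conj_mem {g : SU2} :
    g ∈ Subgroup.normalizer (Q : Set SU2) ↔ g * w * g⁻¹ ∈ Q ∧ g * jmat * g⁻¹ ∈ Q := by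
  refine ⟨fun hg => ⟨(hg w).1 w_mem_Q, (hg jmat).1 jmat_mem_Q⟩, fun ⟨hw, hj⟩ => ?_⟩
  have : Finite (Subgroup.closure {w, jmat}) := finite_Q.to_subtype
  refine Subgroup.mem_normalizer_closure_of_finite fun x hx => ?_
  rcases hx with rfl | rfl
  exacts [hw, hj]

def IsNormalizerPair (a b : ℂ) : Prop :=
  (b = 0 ∧ a ^ 8 = 1) ∨ (a = 0 ∧ b ^ 8 = 1) ∨ (16 * a ^ 8 = 1 ∧ b ^ 4 = a ^ 4)

lemma isNormalizerPair_of_isQPair {a b : ℂ} (hn : a * conj a + b * conj b = 1)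
    (hw : IsQPair (a * conj b - conj a * b) (a ^ 2 + b ^ 2))
    (hj : IsQPair (I * (a * conj a - b * conj b)) (-2 * I * a * b)) : IsNormalizerPair a b := by
  rcases hj with ⟨hβj, -⟩ | ⟨hmod, h16⟩
  · have hab : a * b = 0 := by simpa [I_ne_zero, mul_assoc] using hβj
    rcases mul_eq_zero.1 hab with rfl | rfl
    · simp only [map_zero, mul_zero, zero_add, zero_mul, sub_self, ne_eq, OfNat.ofNat_ne_zero,
        not_false_eq_true, zero_pow, true_and, IsQPair] at hn hw
      rcases hw with ⟨hb, -⟩ | hb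
      · simp [pow_eq_zero_iff two_ne_zero |>.1 hb] at hn
      · exact Or.inr (Or.inl ⟨rfl, by linear_combination hb⟩)
    · simp only [map_zero, mul_zero, add_zero, sub_self, ne_eq, OfNat.ofNat_ne_zero,
        not_false_eq_true, zero_pow, true_and, IsQPair] at hn hw
      rcases hw with ⟨ha, -⟩ | ha
      · simp [pow_eq_zero_iff two_ne_zero |>.1 ha] at hn
      · exact Or.inl ⟨rfl, by linear_combination ha⟩
  have hmod : a * conj a = b * conj b := by simpa [I_ne_zero, sub_eq_zero] using hmod
  have ha0 : conj a ≠ 0 := by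
    intro h0
    have : 2 * (a * conj a) = 1 := by linear_combination hn + hmod
    rw [h0, mul_zero, mul_zero] at this
    exact zero_ne_one this
  suffices hba : b ^ 4 = a ^ 4 by
    refine Or.inr (Or.inr ⟨?_, hba⟩)
    linear_combination h16 - 16 * a ^ 4 * hba - 16 * a ^ 4 * b ^ 4 * I_pow_four
  rcases hw with ⟨hsq, -⟩ | ⟨hre, -⟩
  · linear_combination (b ^ 2 - a ^ 2) * hsq
  · have : conj a * (a ^ 2 - b ^ 2) = 0 := by linear_combination b * hre + a * hmod
    have hsq : a ^ 2 = b ^ 2 := sub_eq_zero.1 ((mul_eq_zero.1 this).resolve_left ha0)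
    linear_combination (-(a ^ 2 + b ^ 2)) * hsq

lemma isQPair_of_isNormalizerPair {a b : ℂ} (hn : a * conj a + b * conj b = 1)
    (h : IsNormalizerPair a b) :
    IsQPair (a * conj b - conj a * b) (a ^ 2 + b ^ 2) ∧
      IsQPair (I * (a * conj a - b * conj b)) (-2 * I * a * b) := by
  rcases h with ⟨rfl, ha⟩ | ⟨rfl, hb⟩ | ⟨h16, hba⟩
  · simp only [map_zero, mul_zero, sub_zero, add_zero] at hn ⊢
    refine ⟨Or.inr ⟨rfl, by linear_combination ha⟩, Or.inl ⟨rfl, ?_⟩⟩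
    rw [hn, mul_one, I_pow_four]
  · simp only [map_zero, mul_zero, zero_mul, zero_sub, zero_add, sub_self] at hn ⊢
    refine ⟨Or.inr ⟨by ring, by linear_combination hb⟩, Or.inl ⟨rfl, ?_⟩⟩
    rw [hn, mul_neg, mul_one, neg_pow, I_pow_four]
    norm_num
  have hmod : b * conj b = a * conj a := Complex.mul_conj_eq_of_pow_eq four_ne_zero hba
  have ha : 2 * (a * conj a) = 1 := by linear_combination hn - hmod
  have hj : IsQPair (I * (a * conj a - b * conj b)) (-2 * I * a * b) :=
    Or.inr ⟨by rw [hmod, sub_self, mul_zero],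
      by linear_combination 16 * a ^ 4 * b ^ 4 * I_pow_four + 16 * a ^ 4 * hba + h16⟩
  refine ⟨?_, hj⟩
  have hsq : (b ^ 2 - a ^ 2) * (b ^ 2 + a ^ 2) = 0 := by linear_combination hba
  rcases mul_eq_zero.1 hsq with h | h
  · have hc : conj b ^ 2 = conj a ^ 2 := by
      rw [← map_pow, ← map_pow, sub_eq_zero.1 h]
    have hX : (a * conj b - conj a * b) ^ 2 = 0 := by
      linear_combination a ^ 2 * hc + conj a ^ 2 * (sub_eq_zero.1 h) - 2 * a * conj a * hmod
    refine Or.inr ⟨pow_eq_zero_iff two_ne_zero |>.1 hX, ?_⟩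
    rw [sub_eq_zero.1 h]
    linear_combination h16
  · have hb : b ^ 2 = -a ^ 2 := by linear_combination h
    have hc : conj b ^ 2 = -conj a ^ 2 := by
      rw [← map_pow, ← map_pow, hb, map_neg]
    have hX : (a * conj b - conj a * b) ^ 2 = -1 := by
      linear_combination a ^ 2 * hc + conj a ^ 2 * hb - 2 * a * conj a * hmod
        - (2 * (a * conj a) + 1) * ha
    refine Or.inl ⟨by linear_combination hb, ?_⟩
    rw [show (4 : ℕ) = 2 * 2 from rfl, pow_mul, hX]
    norm_num

lemma mem_normalizer_Q_iff_isNormalizerPair {g : SU2} :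
    g ∈ Subgroup.normalizer (Q : Set SU2) ↔ IsNormalizerPair (α g) (β g) := by
  rw [mem_normalizer_Q_iff_conj_mem, mem_Q_iff, mem_Q_iff, α_conj_w, β_conj_w, α_conj_jmat,
    β_conj_jmat]
  exact ⟨fun ⟨hw, hj⟩ => isNormalizerPair_of_isQPair (α_mul_conj_add_β_mul_conj g) hw hj,
    isQPair_of_isNormalizerPair (α_mul_conj_add_β_mul_conj g)⟩

-- Multiplication by `ρ` maps the 8th roots of unity onto the solutions of `16 z ^ 8 = 1`.
def ρ : ℂ := (1 + I) / 2

lemma ρ_pow_eight : ρ ^ 8 = 1 / 16 := by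
  rw [ρ, div_pow, show (8 : ℕ) = 2 * 4 from rfl, pow_mul, add_sq, I_sq]
  norm_num [mul_pow, I_pow_four]

lemma ρ_ne_zero : ρ ≠ 0 := by
  intro h
  simpa [h] using ρ_pow_eight

lemma ρ_mul_conj : ρ * conj ρ = 1 / 2 := by
  rw [ρ, map_div₀, map_add, map_one, conj_I, map_ofNat]
  linear_combination -I_sq / 4

lemma isNormalizerPair_mul_conj_add {a b : ℂ} (h : IsNormalizerPair a b) :
    a * conj a + b * conj b = 1 := by
  have unit_of_pow {z : ℂ} (hz : z ^ 8 = 1) : z * conj z = 1 := by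
    simpa using Complex.mul_conj_eq_of_pow_eq (a := 1) (by norm_num) (hz.trans (one_pow 8).symm)
  rcases h with ⟨rfl, ha⟩ | ⟨rfl, hb⟩ | ⟨h16, hba⟩
  · simp [unit_of_pow ha]
  · simp [unit_of_pow hb]
  have ha : a * conj a = 1 / 2 := by
    rw [← ρ_mul_conj]
    exact Complex.mul_conj_eq_of_pow_eq (n := 8) (by norm_num)
      (by linear_combination h16 / 16 - ρ_pow_eight)
  rw [Complex.mul_conj_eq_of_pow_eq four_ne_zero hba, ha]
  norm_num

open Polynomial in
def normalizerPairs : Finset (ℂ × ℂ) :=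
  nthRootsFinset 8 (1 : ℂ) ×ˢ {0} ∪ {0} ×ˢ nthRootsFinset 8 (1 : ℂ) ∪
    (nthRootsFinset 8 (1 : ℂ) ×ˢ nthRootsFinset 4 (1 : ℂ)).image fun p => (ρ * p.1, ρ * p.1 * p.2)

lemma exists_ρ_mul_iff {a b : ℂ} :
    (∃ x ε : ℂ, (x ^ 8 = 1 ∧ ε ^ 4 = 1) ∧ ρ * x = a ∧ ρ * x * ε = b) ↔
      16 * a ^ 8 = 1 ∧ b ^ 4 = a ^ 4 := by
  constructor
  · rintro ⟨x, ε, ⟨hx, hε⟩, rfl, rfl⟩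
    refine ⟨?_, by rw [mul_pow _ ε, hε, mul_one]⟩
    rw [mul_pow, hx, ρ_pow_eight]
    norm_num
  rintro ⟨h16, hba⟩
  have ha : a ≠ 0 := by rintro rfl; norm_num at h16
  refine ⟨a / ρ, b / a, ⟨?_, ?_⟩, mul_div_cancel₀ a ρ_ne_zero, ?_⟩
  · rw [div_pow, ρ_pow_eight, div_eq_one_iff_eq (by norm_num)]
    linear_combination h16 / 16
  · rw [div_pow, hba, div_self (pow_ne_zero 4 ha)]
  · rw [mul_div_cancel₀ a ρ_ne_zero, mul_div_cancel₀ b ha]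

lemma mem_normalizerPairs {p : ℂ × ℂ} : p ∈ normalizerPairs ↔ IsNormalizerPair p.1 p.2 := by
  obtain ⟨a, b⟩ := p
  simp only [normalizerPairs, Finset.mem_union, Finset.mem_product, Finset.mem_singleton,
    Finset.mem_image,
    Polynomial.mem_nthRootsFinset (by norm_num : 0 < 8),
    Polynomial.mem_nthRootsFinset (by norm_num : 0 < 4), Prod.exists, Prod.mk.injEq,
    exists_ρ_mul_iff, IsNormalizerPair]
  tauto

lemma injOn_ρ_mul : Set.InjOn (fun p : ℂ × ℂ => (ρ * p.1, ρ * p.1 * p.2)) {p | p.1 ≠ 0} := by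
  rintro ⟨x, ε⟩ (hx : x ≠ 0) ⟨x', ε'⟩ - h
  obtain ⟨h1, h2⟩ := Prod.mk.inj h
  rw [← h1] at h2
  exact Prod.ext (mul_left_cancel₀ ρ_ne_zero h1) (mul_left_cancel₀ (mul_ne_zero ρ_ne_zero hx) h2)

open Finset Polynomial in
lemma card_normalizerPairs : #normalizerPairs = 48 := by
  have h8 : (0 : ℕ) < 8 := by norm_num
  have h4 : (0 : ℕ) < 4 := by norm_num
  have hμ8 : #(nthRootsFinset 8 (1 : ℂ)) = 8 :=
    (isPrimitiveRoot_exp 8 (by norm_num)).card_nthRootsFinset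
  have hμ4 : #(nthRootsFinset 4 (1 : ℂ)) = 4 := isPrimitiveRoot_I.card_nthRootsFinset
  have hsub : ↑(nthRootsFinset 8 (1 : ℂ) ×ˢ nthRootsFinset 4 (1 : ℂ)) ⊆ {p : ℂ × ℂ | p.1 ≠ 0} :=
    fun p hp h0 => by simp [h0] at hp
  have hdisj₁ :
      Disjoint (nthRootsFinset 8 (1 : ℂ) ×ˢ {0}) ({0} ×ˢ nthRootsFinset 8 (1 : ℂ)) := by
    rw [disjoint_left]
    rintro ⟨a, b⟩ h₁ h₂
    simp only [mem_product, mem_singleton, mem_nthRootsFinset h8] at h₁ h₂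
    simp [h₂.1] at h₁
  have hdisj₂ : Disjoint (nthRootsFinset 8 (1 : ℂ) ×ˢ {0} ∪ {0} ×ˢ nthRootsFinset 8 (1 : ℂ))
      ((nthRootsFinset 8 (1 : ℂ) ×ˢ nthRootsFinset 4 (1 : ℂ)).image
        fun p => (ρ * p.1, ρ * p.1 * p.2)) := by
    rw [disjoint_left]
    rintro ⟨a, b⟩ h₁ h₂
    simp only [mem_union, mem_product, mem_singleton, mem_image, mem_nthRootsFinset h8,
      mem_nthRootsFinset h4, Prod.exists, Prod.mk.injEq, exists_ρ_mul_iff] at h₁ h₂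
    rcases h₁ with ⟨ha, rfl⟩ | ⟨rfl, -⟩
    · have ha0 : a = 0 :=
        pow_eq_zero_iff four_ne_zero |>.1 (h₂.2.symm.trans (zero_pow four_ne_zero))
      simp [ha0] at ha
    · norm_num at h₂
  rw [normalizerPairs, card_union_eq_card_add_card.2 hdisj₂,
    card_union_eq_card_add_card.2 hdisj₁,
    card_image_of_injOn (injOn_ρ_mul.mono hsub), card_product, card_product, card_product,
    card_singleton, hμ8, hμ4]

lemma coe_normalizer_Q :
    (Subgroup.normalizer (Q : Set SU2) : Set SU2) = toPair ⁻¹' normalizerPairs :=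
  Set.ext fun g =>
    mem_normalizer_Q_iff_isNormalizerPair.trans (mem_normalizerPairs (p := toPair g)).symm

lemma normalizerPairs_subset_range_toPair :
    (normalizerPairs : Set (ℂ × ℂ)) ⊆ Set.range toPair := fun _ hp =>
  mem_range_toPair (isNormalizerPair_mul_conj_add (mem_normalizerPairs.1 hp))

end SU2

/-- The normalizer of `Q` in `SU(2)` is a finite group of order `48`. -/
theorem normalizer_Q_card_48 :
    Finite ↥(Subgroup.normalizer (Q : Set SU2)) ∧ Nat.card ↥(Subgroup.normalizer (Q : Set SU2)) = 48 := by
  have hcard : Nat.card (Subgroup.normalizer (Q : Set SU2)) = 48 := by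
    rw [← SetLike.coe_sort_coe, SU2.coe_normalizer_Q, Nat.card_coe_set_eq,
      ← Set.ncard_image_of_injective _ SU2.toPair_injective,
      Set.image_preimage_eq_of_subset SU2.normalizerPairs_subset_range_toPair, Set.ncard_coe_finset,
      SU2.card_normalizerPairs]
  exact ⟨Nat.finite_of_card_ne_zero (by rw [hcard]; norm_num), hcard⟩
end
end

section
/- The normalizer of S in SU(2) equals S, where S is the maximal discrete 2-toral subgroup of SU(2) generated by the 2-power torsion of the diagonal maximal torus together with w. -/
open Matrix Complex

noncomputable section

/-- The underlying set of the diagonal maximal torus of `SU(2)`: the matrices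
`diag (a, conj a)` with `a` a complex number of absolute value `1`. -/
def Tset : Set SU2 :=
  {x : SU2 | ∃ a : ℂ, ‖a‖ = 1 ∧
    (x : Matrix (Fin 2) (Fin 2) ℂ) = !![a, 0; 0, (starRingEnd ℂ) a]}

/-- The maximal discrete 2-toral subgroup `S` of `SU(2)`, generated by `w` together with
the elements of the diagonal maximal torus of 2-power order. -/
def S : Subgroup SU2 :=
  Subgroup.closure ({w} ∪ {x : SU2 | x ∈ Tset ∧ ∃ n : ℕ, x ^ 2 ^ n = 1})

/-!
Write `T₂` for the 2-primary torsion of the circle, so that `S = diag T₂ ∪ w · diag T₂`, where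
every element of the coset `w · diag T₂` squares to the central element `-1`. Let `g` normalize `S`
and let `t = diag ζ` with `ζ` of order 8. Then `g t g⁻¹` squares to `g (diag ζ²) g⁻¹ ≠ -1`, so it
is diagonal; as the eigenvalues `ζ ≠ ζ̄` of `t` are distinct, `g` permutes the coordinate lines,
i.e. `g ∈ diag p · {1, w}`. Finally `diag p · w · diag p⁻¹ = w · diag p⁻²` lies in `S` only if
`p⁻² ∈ T₂`, that is, `p ∈ T₂`.
-/

open ComplexConjugate

local notation "M₂" => Matrix (Fin 2) (Fin 2) ℂ

lemma Matrix.star_eq_adjugate_of_mem_specialUnitaryGroup {n α : Type*} [Fintype n] [DecidableEq n]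
    [CommRing α] [StarRing α] {A : Matrix n n α} (hA : A ∈ specialUnitaryGroup n α) :
    star A = adjugate A := by
  rw [← Matrix.inv_eq_left_inv (mem_unitaryGroup_iff'.1 hA.1), inv_def,
    (mem_specialUnitaryGroup_iff.1 hA).2, Ring.inverse_one, one_smul]

lemma Matrix.apply_zero_zero_eq_zero_or_apply_zero_one_eq_zero {R : Type*} [CommRing R]
    [NoZeroDivisors R] {M : Matrix (Fin 2) (Fin 2) R} {a b c d : R}
    (h : M * !![a, 0; 0, b] = !![c, 0; 0, d] * M) (hab : a ≠ b) : M 0 0 = 0 ∨ M 0 1 = 0 := by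
  have h₀₀ : M 0 0 * a = M 0 0 * c := by
    simpa [mul_apply, mul_comm] using congrFun (congrFun h 0) 0
  have h₀₁ : M 0 1 * b = M 0 1 * c := by
    simpa [mul_apply, mul_comm] using congrFun (congrFun h 0) 1
  by_contra! hM
  exact hab ((mul_left_cancel₀ hM.1 h₀₀).trans (mul_left_cancel₀ hM.2 h₀₁).symm)

lemma CommGroup.mem_primaryComponent_of_pow_mem {G : Type*} [CommGroup G] {p : ℕ} {g : G}
    (h : g ^ p ∈ CommGroup.primaryComponent G p) : g ∈ CommGroup.primaryComponent G p := by
  obtain ⟨k, hk⟩ := CommGroup.mem_primaryComponent.1 h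
  exact CommGroup.mem_primaryComponent.2 ⟨k + 1, by rwa [pow_succ', pow_mul]⟩

namespace SU2

def diag : Circle →* SU2 where
  toFun z := ⟨!![(z : ℂ), 0; 0, conj (z : ℂ)], by
    simpa using mem_su2 z 0 (by simp [Complex.mul_conj])⟩
  map_one' := Subtype.ext (by simp [Matrix.one_fin_two])
  map_mul' z z' := Subtype.ext (by simp)

lemma coe_diag (z : Circle) : (diag z : M₂) = !![(z : ℂ), 0; 0, conj (z : ℂ)] := rfl

lemma diag_injective : Function.Injective diag := fun z z' h ↦
  Circle.coe_injective (by simpa [coe_diag] using congrFun (congrFun (congrArg Subtype.val h) 0) 0)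

lemma coe_diag_neg_one : (diag (-1) : M₂) = -1 := by
  simp [coe_diag, Matrix.one_fin_two]

lemma diag_neg_one_mem_center : diag (-1) ∈ Subgroup.center SU2 :=
  Subgroup.mem_center_iff.2 fun g ↦ Subtype.ext (by
    simp only [Submonoid.coe_mul, coe_diag_neg_one, mul_neg, mul_one, neg_mul, one_mul])

lemma coe_w : (w : M₂) = !![0, 1; -1, 0] := rfl

lemma diag_mul_w (z : Circle) : diag z * w = w * diag z⁻¹ := Subtype.ext <| by
  simp only [Submonoid.coe_mul, coe_diag, coe_w, Matrix.mul_fin_two]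
  simp [← Circle.coe_inv_eq_conj]

lemma w_mul_w : w * w = diag (-1) := Subtype.ext <| by
  simp only [Submonoid.coe_mul, coe_diag, coe_w, Matrix.mul_fin_two]
  simp

lemma w_mul_diag_ne_diag (z z' : Circle) : w * diag z ≠ diag z' := fun h ↦
  Circle.coe_ne_zero z' <| by
    simpa [coe_diag, coe_w, Matrix.mul_fin_two] using
      (congrFun (congrFun (congrArg Subtype.val h) 0) 0).symm

lemma sq_w_mul_diag (z : Circle) : (w * diag z) ^ 2 = diag (-1) := by
  rw [sq, mul_assoc, ← mul_assoc (diag z), diag_mul_w, mul_assoc, ← map_mul, inv_mul_cancel,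
    map_one, mul_one, w_mul_w]

lemma inv_w : w⁻¹ = w * diag (-1) := by
  rw [inv_eq_iff_mul_eq_one, ← mul_assoc, w_mul_w, ← map_mul, neg_one_mul, neg_neg, map_one]

lemma coe_eq_first_row (g : SU2) :
    (g : M₂) = !![(g : M₂) 0 0, (g : M₂) 0 1; -conj ((g : M₂) 0 1), conj ((g : M₂) 0 0)] := by
  have h := Matrix.star_eq_adjugate_of_mem_specialUnitaryGroup g.2
  rw [adjugate_fin_two] at h
  have h₀₀ := congrFun (congrFun h 0) 0
  have h₀₁ := congrFun (congrFun h 0) 1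
  simp only [star_apply, RCLike.star_def, of_apply, cons_val', cons_val_zero, cons_val_one,
    empty_val', cons_val_fin_one] at h₀₀ h₀₁
  have h₁₀ : -conj ((g : M₂) 0 1) = (g : M₂) 1 0 := by
    simpa using (congrArg conj h₀₁).symm
  rw [h₀₀, h₁₀]
  exact eta_fin_two _

lemma norm_sq_add_norm_sq (g : SU2) : ‖(g : M₂) 0 0‖ ^ 2 + ‖(g : M₂) 0 1‖ ^ 2 = 1 := by
  have h : (g : M₂).det = 1 := g.2.2
  rw [coe_eq_first_row g, det_fin_two_of] at h
  have : ((‖(g : M₂) 0 0‖ ^ 2 + ‖(g : M₂) 0 1‖ ^ 2 : ℝ) : ℂ) = 1 := by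
    push_cast
    rw [← Complex.mul_conj', ← Complex.mul_conj']
    linear_combination h
  exact_mod_cast this

lemma exists_diag_eq_of_apply_zero_one_eq_zero {g : SU2} (h : (g : M₂) 0 1 = 0) :
    ∃ z, diag z = g := by
  have hn : ‖(g : M₂) 0 0‖ = 1 := by
    have := norm_sq_add_norm_sq g
    rw [h, norm_zero, zero_pow two_ne_zero, add_zero] at this
    exact (pow_eq_one_iff_of_nonneg (norm_nonneg _) two_ne_zero).1 this
  obtain ⟨z, hz⟩ : ∃ z : Circle, (z : ℂ) = (g : M₂) 0 0 := ⟨⟨_, mem_sphere_zero_iff_norm.2 hn⟩, rfl⟩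
  refine ⟨z, Subtype.ext ?_⟩
  rw [coe_diag, hz]
  conv_rhs => rw [coe_eq_first_row g, h]
  simp

lemma exists_w_mul_diag_eq_of_apply_zero_zero_eq_zero {g : SU2} (h : (g : M₂) 0 0 = 0) :
    ∃ z, w * diag z = g := by
  have hn : ‖conj ((g : M₂) 0 1)‖ = 1 := by
    have := norm_sq_add_norm_sq g
    rw [h, norm_zero, zero_pow two_ne_zero, zero_add] at this
    rw [Complex.norm_conj]
    exact (pow_eq_one_iff_of_nonneg (norm_nonneg _) two_ne_zero).1 this
  obtain ⟨z, hz⟩ : ∃ z : Circle, (z : ℂ) = conj ((g : M₂) 0 1) :=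
    ⟨⟨_, mem_sphere_zero_iff_norm.2 hn⟩, rfl⟩
  refine ⟨z, Subtype.ext ?_⟩
  rw [Submonoid.coe_mul, coe_diag, coe_w, hz]
  conv_rhs => rw [coe_eq_first_row g, h]
  simp

lemma mem_Tset_iff {x : SU2} : x ∈ Tset ↔ x ∈ Set.range diag := by
  constructor
  · rintro ⟨a, ha, hx⟩
    exact ⟨⟨a, mem_sphere_zero_iff_norm.2 ha⟩, Subtype.ext hx.symm⟩
  · rintro ⟨z, rfl⟩
    exact ⟨z, Circle.norm_coe z, rfl⟩

local notation "T₂" => CommGroup.primaryComponent Circle 2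

lemma neg_one_mem_primaryComponent : (-1 : Circle) ∈ T₂ :=
  CommGroup.mem_primaryComponent.2 ⟨1, by simp⟩

lemma diag_pow_two_pow_eq_one_iff {z : Circle} {n : ℕ} : diag z ^ 2 ^ n = 1 ↔ z ^ 2 ^ n = 1 := by
  rw [← map_pow, diag_injective.eq_iff' (map_one diag)]

lemma w_mem_S : w ∈ S := Subgroup.subset_closure (Or.inl rfl)

lemma diag_mem_S {z : Circle} (hz : z ∈ T₂) : diag z ∈ S := by
  obtain ⟨n, hn⟩ := CommGroup.mem_primaryComponent.1 hz
  exact Subgroup.subset_closure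
    (Or.inr ⟨mem_Tset_iff.2 ⟨z, rfl⟩, n, diag_pow_two_pow_eq_one_iff.2 hn⟩)

lemma mem_S_iff {x : SU2} : x ∈ S ↔ ∃ z ∈ T₂, x = diag z ∨ x = w * diag z := by
  refine ⟨fun hx ↦ ?_, ?_⟩
  · induction hx using Subgroup.closure_induction with
    | mem x hx =>
      rcases hx with rfl | ⟨hx, n, hn⟩
      · exact ⟨1, one_mem _, Or.inr (by simp)⟩
      · obtain ⟨z, rfl⟩ := mem_Tset_iff.1 hx
        exact ⟨z, CommGroup.mem_primaryComponent.2 ⟨n, diag_pow_two_pow_eq_one_iff.1 hn⟩,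
          Or.inl rfl⟩
    | one => exact ⟨1, one_mem _, Or.inl (map_one diag).symm⟩
    | mul x y _ _ hx hy =>
      obtain ⟨a, ha, rfl | rfl⟩ := hx <;> obtain ⟨b, hb, rfl | rfl⟩ := hy
      · exact ⟨a * b, mul_mem ha hb, Or.inl (map_mul diag a b).symm⟩
      · refine ⟨a⁻¹ * b, mul_mem (inv_mem ha) hb, Or.inr ?_⟩
        rw [← mul_assoc, diag_mul_w, mul_assoc, ← map_mul]
      · refine ⟨a * b, mul_mem ha hb, Or.inr ?_⟩
        rw [mul_assoc, ← map_mul]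
      · refine ⟨-1 * (a⁻¹ * b), mul_mem neg_one_mem_primaryComponent (mul_mem (inv_mem ha) hb),
          Or.inl ?_⟩
        rw [mul_assoc, ← mul_assoc (diag a), diag_mul_w, mul_assoc, ← mul_assoc w, w_mul_w,
          ← map_mul, ← map_mul]
    | inv x _ hx =>
      obtain ⟨a, ha, rfl | rfl⟩ := hx
      · exact ⟨a⁻¹, inv_mem ha, Or.inl (map_inv diag a).symm⟩
      · refine ⟨-1 * a, mul_mem neg_one_mem_primaryComponent ha, Or.inr ?_⟩
        rw [_root_.mul_inv_rev, inv_w, ← mul_assoc, ← map_inv, diag_mul_w, inv_inv, mul_assoc,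
          ← map_mul, mul_comm]
  · rintro ⟨z, hz, rfl | rfl⟩
    · exact diag_mem_S hz
    · exact mul_mem w_mem_S (diag_mem_S hz)

lemma conj_diag_ne_w_mul_diag (g : SU2) {z : Circle} (hz : z ^ 2 ≠ -1) (c : Circle) :
    g * diag z * g⁻¹ ≠ w * diag c := fun h ↦ hz <| diag_injective <| by
  have hsq : g * diag (z ^ 2) * g⁻¹ = diag (-1) := by rw [map_pow, ← conj_pow, h, sq_w_mul_diag]
  rwa [mul_inv_eq_iff_eq_mul, ← Subgroup.mem_center_iff.1 diag_neg_one_mem_center g,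
    mul_left_cancel_iff] at hsq

lemma exists_eq_diag_or_eq_w_mul_diag_of_conj_eq_diag {g : SU2} {z c : Circle} (hz : z ^ 2 ≠ 1)
    (h : g * diag z * g⁻¹ = diag c) : ∃ p, g = diag p ∨ g = w * diag p := by
  have hM : (g : M₂) * !![(z : ℂ), 0; 0, conj (z : ℂ)] = !![(c : ℂ), 0; 0, conj (c : ℂ)] * g :=
    congrArg Subtype.val (mul_inv_eq_iff_eq_mul.1 h)
  have hzc : (z : ℂ) ≠ conj (z : ℂ) := by
    rw [← Circle.coe_inv_eq_conj, Ne, Circle.coe_inj, eq_inv_iff_mul_eq_one, ← sq]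
    exact hz
  rcases Matrix.apply_zero_zero_eq_zero_or_apply_zero_one_eq_zero hM hzc with h₀ | h₁
  · obtain ⟨p, hp⟩ := exists_w_mul_diag_eq_of_apply_zero_zero_eq_zero h₀
    exact ⟨p, Or.inr hp.symm⟩
  · obtain ⟨p, hp⟩ := exists_diag_eq_of_apply_zero_one_eq_zero h₁
    exact ⟨p, Or.inl hp.symm⟩

lemma exists_eq_diag_or_eq_w_mul_diag_of_mem_normalizer {g : SU2}
    (hg : g ∈ Subgroup.normalizer (S : Set SU2)) : ∃ p, g = diag p ∨ g = w * diag p := by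
  set ζ := Circle.exp (Real.pi / 4)
  have hζ₄ : ζ ^ 4 = Circle.exp Real.pi := by
    rw [← Circle.exp_natCast_mul]; congr 1; push_cast; ring
  have hζ₈ : ζ ^ 2 ^ 3 = 1 := by
    rw [show 2 ^ 3 = 4 * 2 by norm_num, pow_mul, hζ₄, ← Circle.exp_natCast_mul]
    push_cast
    exact Circle.exp_two_pi
  have hζ₂ : ∀ ε : Circle, ε ^ 2 = 1 → ζ ^ 2 ≠ ε := fun ε hε h ↦
    Circle.exp_pi_ne_one (by rw [← hζ₄, show 4 = 2 * 2 by norm_num, pow_mul, h, hε])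
  obtain ⟨c, -, h | h⟩ := mem_S_iff.1 <|
    (Subgroup.mem_normalizer_iff.1 hg _).1 (diag_mem_S (CommGroup.mem_primaryComponent.2 ⟨3, hζ₈⟩))
  · exact exists_eq_diag_or_eq_w_mul_diag_of_conj_eq_diag (hζ₂ 1 (one_pow 2)) h
  · exact absurd h (conj_diag_ne_w_mul_diag g (hζ₂ (-1) (by simp)) c)

lemma mem_primaryComponent_of_diag_mem_normalizer {p : Circle}
    (hp : diag p ∈ Subgroup.normalizer (S : Set SU2)) : p ∈ T₂ := by
  have h := (Subgroup.mem_normalizer_iff.1 hp w).1 w_mem_S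
  rw [diag_mul_w, mul_assoc, ← map_inv, ← map_mul, mem_S_iff] at h
  obtain ⟨c, hc, h | h⟩ := h
  · exact absurd h (w_mul_diag_ne_diag _ _)
  · rw [mul_left_cancel_iff, diag_injective.eq_iff, ← sq] at h
    exact inv_mem_iff.1 (CommGroup.mem_primaryComponent_of_pow_mem (h ▸ hc))

end SU2

/-- The normalizer of the maximal discrete 2-toral subgroup `S` in `SU(2)` equals `S`. -/
theorem normalizer_S_eq_S : Subgroup.normalizer (S : Set SU2) = S := by
  refine le_antisymm (fun g hg ↦ ?_) Subgroup.le_normalizer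
  obtain ⟨p, rfl | rfl⟩ := SU2.exists_eq_diag_or_eq_w_mul_diag_of_mem_normalizer hg
  · exact SU2.diag_mem_S (SU2.mem_primaryComponent_of_diag_mem_normalizer hg)
  · have hp : SU2.diag p ∈ Subgroup.normalizer (S : Set SU2) := by
      simpa using mul_mem (inv_mem (Subgroup.le_normalizer SU2.w_mem_S)) hg
    exact mul_mem SU2.w_mem_S (SU2.diag_mem_S (SU2.mem_primaryComponent_of_diag_mem_normalizer hp))
end
end

section
/- Any two elements of S that do not lie in the diagonal maximal torus T are conjugate in S; that is, for all x, y ∈ S with x ∉ T and y ∉ T, there exists s ∈ S with s·x·s⁻¹ = y. -/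
open Matrix Complex

noncomputable section

/-! Every element of `S` is a monomial matrix whose entries are 2-power roots of unity, so an
element outside `T` has the form `[[0, a], [-ā, 0]]`. Conjugation by `diag (c, c̄)` turns `a` into
`c² a`, and a square root `c` of `b ā` is again a 2-power root of unity, giving an element of `S`
that conjugates `[[0, a], [-ā, 0]]` to `[[0, b], [-b̄, 0]]`. -/

section TwoPowerTorsion

variable {M : Type*} [CommMonoid M]

def IsTwoPowerTorsion (a : M) : Prop := ∃ n : ℕ, a ^ 2 ^ n = 1

lemma isTwoPowerTorsion_one : IsTwoPowerTorsion (1 : M) := ⟨0, one_pow _⟩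

lemma IsTwoPowerTorsion.mul {a b : M} (ha : IsTwoPowerTorsion a) (hb : IsTwoPowerTorsion b) :
    IsTwoPowerTorsion (a * b) := by
  obtain ⟨m, hm⟩ := ha
  obtain ⟨n, hn⟩ := hb
  refine ⟨m + n, ?_⟩
  rw [mul_pow, pow_add, pow_mul, hm, one_pow, one_mul, mul_comm, pow_mul, hn, one_pow]

lemma IsTwoPowerTorsion.map {N F : Type*} [CommMonoid N] [FunLike F M N] [MonoidHomClass F M N]
    (f : F) {a : M} (ha : IsTwoPowerTorsion a) : IsTwoPowerTorsion (f a) := by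
  obtain ⟨n, hn⟩ := ha
  exact ⟨n, by rw [← map_pow, hn, map_one]⟩

lemma IsTwoPowerTorsion.of_sq {a c : M} (ha : IsTwoPowerTorsion a) (hc : c ^ 2 = a) :
    IsTwoPowerTorsion c := by
  obtain ⟨n, hn⟩ := ha
  exact ⟨n + 1, by rw [pow_succ', pow_mul, hc, hn]⟩

lemma IsTwoPowerTorsion.neg {R : Type*} [CommRing R] {a : R} (ha : IsTwoPowerTorsion a) :
    IsTwoPowerTorsion (-a) := by
  simpa using (isTwoPowerTorsion_one.of_sq (neg_one_sq (R := R))).mul ha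

lemma IsTwoPowerTorsion.norm_eq_one {a : ℂ} (ha : IsTwoPowerTorsion a) : ‖a‖ = 1 := by
  obtain ⟨n, hn⟩ := ha
  exact Complex.norm_eq_one_of_pow_eq_one hn (by positivity)

lemma IsTwoPowerTorsion.mul_conj {a : ℂ} (ha : IsTwoPowerTorsion a) :
    a * starRingEnd ℂ a = 1 := by
  rw [Complex.mul_conj', ha.norm_eq_one]; norm_num

end TwoPowerTorsion

section MonomialMatrices

variable {R : Type*} [CommRing R] [StarRing R]

def diagStar (a : R) : Matrix (Fin 2) (Fin 2) R := !![a, 0; 0, star a]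

def antidiagStar (a : R) : Matrix (Fin 2) (Fin 2) R := !![0, a; -star a, 0]

lemma diagStar_mul_diagStar (a b : R) : diagStar a * diagStar b = diagStar (a * b) := by
  simp [diagStar, mul_comm]

lemma diagStar_mul_antidiagStar (a b : R) :
    diagStar a * antidiagStar b = antidiagStar (a * b) := by
  simp [diagStar, antidiagStar, mul_comm]

lemma antidiagStar_mul_diagStar (a b : R) :
    antidiagStar a * diagStar b = antidiagStar (a * star b) := by
  simp [diagStar, antidiagStar, mul_comm]

lemma antidiagStar_mul_antidiagStar (a b : R) :
    antidiagStar a * antidiagStar b = diagStar (-(a * star b)) := by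
  simp [diagStar, antidiagStar, mul_comm]

lemma star_diagStar (a : R) : star (diagStar a) = diagStar (star a) := by
  ext i j; fin_cases i <;> fin_cases j <;> simp [diagStar]

lemma star_antidiagStar (a : R) : star (antidiagStar a) = antidiagStar (-a) := by
  ext i j; fin_cases i <;> fin_cases j <;> simp [antidiagStar]

lemma diagStar_pow (a : R) (n : ℕ) : diagStar a ^ n = diagStar (a ^ n) := by
  induction n with
  | zero => simp [diagStar, Matrix.one_fin_two]
  | succ n ih => rw [pow_succ, ih, diagStar_mul_diagStar, pow_succ]

lemma diagStar_mul_antidiagStar_mul_diagStar_star (c a : R) :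
    diagStar c * antidiagStar a * diagStar (star c) = antidiagStar (c ^ 2 * a) := by
  rw [diagStar_mul_antidiagStar, antidiagStar_mul_diagStar, star_star]; ring_nf

end MonomialMatrices

lemma diagStar_mem_specialUnitaryGroup {a : ℂ} (ha : a * starRingEnd ℂ a = 1) :
    diagStar a ∈ Matrix.specialUnitaryGroup (Fin 2) ℂ := by
  simpa [diagStar] using mem_su2 a 0 (by simpa using ha)

lemma coe_inv_specialUnitaryGroup {n R : Type*} [DecidableEq n] [Fintype n] [CommRing R]
    [StarRing R] (x : Matrix.specialUnitaryGroup n R) :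
    ((x⁻¹ : Matrix.specialUnitaryGroup n R) : Matrix n n R) = star (x : Matrix n n R) := rfl

def twoTorsionMonomial (R : Type*) [CommRing R] [StarRing R] :
    Subgroup (Matrix.specialUnitaryGroup (Fin 2) R) where
  carrier := {x | ∃ a, IsTwoPowerTorsion a ∧ (x.1 = diagStar a ∨ x.1 = antidiagStar a)}
  one_mem' := ⟨1, isTwoPowerTorsion_one, Or.inl (by simp [diagStar, Matrix.one_fin_two])⟩
  mul_mem' := by
    rintro x y ⟨a, ha, hx | hx⟩ ⟨b, hb, hy | hy⟩ <;> simp only [Set.mem_ofPred_eq,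
      MulMemClass.coe_mul, hx, hy]
    · exact ⟨_, ha.mul hb, Or.inl (diagStar_mul_diagStar a b)⟩
    · exact ⟨_, ha.mul hb, Or.inr (diagStar_mul_antidiagStar a b)⟩
    · exact ⟨_, ha.mul (hb.map (starRingEnd R)), Or.inr (antidiagStar_mul_diagStar a b)⟩
    · exact ⟨_, (ha.mul (hb.map (starRingEnd R))).neg, Or.inl (antidiagStar_mul_antidiagStar a b)⟩
  inv_mem' := by
    rintro x ⟨a, ha, hx | hx⟩ <;> simp only [Set.mem_ofPred_eq, coe_inv_specialUnitaryGroup, hx]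
    · exact ⟨_, ha.map (starRingEnd R), Or.inl (star_diagStar a)⟩
    · exact ⟨_, ha.neg, Or.inr (star_antidiagStar a)⟩

lemma S_le_twoTorsionMonomial : S ≤ twoTorsionMonomial ℂ := by
  rw [S, Subgroup.closure_le]
  rintro x (rfl | ⟨⟨a, -, hx : x.1 = diagStar a⟩, n, hn⟩)
  · exact ⟨1, isTwoPowerTorsion_one, Or.inr (by simp [w, antidiagStar])⟩
  · refine ⟨a, ⟨n, ?_⟩, Or.inl hx⟩
    have h := congrArg (fun y : SU2 => (y : Matrix (Fin 2) (Fin 2) ℂ) 0 0) hn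
    rw [SubmonoidClass.coe_pow, hx, diagStar_pow] at h
    simpa [diagStar] using h

lemma diagStar_mem_S {c : ℂ} (hc : IsTwoPowerTorsion c) :
    (⟨diagStar c, diagStar_mem_specialUnitaryGroup hc.mul_conj⟩ : SU2) ∈ S := by
  refine Subgroup.subset_closure (Or.inr ⟨⟨c, hc.norm_eq_one, rfl⟩, ?_⟩)
  obtain ⟨n, hn⟩ := hc
  refine ⟨n, Subtype.ext ?_⟩
  rw [SubmonoidClass.coe_pow, diagStar_pow, hn]
  simp [diagStar, Matrix.one_fin_two]

lemma exists_antidiagStar_of_mem_S_of_notMem_Tset {x : SU2} (hxS : x ∈ S) (hxT : x ∉ Tset) :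
    ∃ a, IsTwoPowerTorsion a ∧ (x : Matrix (Fin 2) (Fin 2) ℂ) = antidiagStar a := by
  obtain ⟨a, ha, hx | hx⟩ := S_le_twoTorsionMonomial hxS
  · exact absurd ⟨a, ha.norm_eq_one, hx⟩ hxT
  · exact ⟨a, ha, hx⟩

/-- Any two elements of `S` not lying in the diagonal maximal torus are conjugate in `S`. -/
theorem conjugate_outside_torus :
    ∀ x y : SU2, x ∈ S → y ∈ S → x ∉ Tset → y ∉ Tset →
      ∃ s ∈ S, s * x * s⁻¹ = y := by
  intro x y hxS hyS hxT hyT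
  obtain ⟨a, ha, hx⟩ := exists_antidiagStar_of_mem_S_of_notMem_Tset hxS hxT
  obtain ⟨b, hb, hy⟩ := exists_antidiagStar_of_mem_S_of_notMem_Tset hyS hyT
  obtain ⟨c, hc⟩ := IsAlgClosed.exists_pow_nat_eq (b * starRingEnd ℂ a) two_pos
  have hc_torsion : IsTwoPowerTorsion c := (hb.mul (ha.map (starRingEnd ℂ))).of_sq hc
  refine ⟨_, diagStar_mem_S hc_torsion, Subtype.ext ?_⟩
  rw [MulMemClass.coe_mul, MulMemClass.coe_mul, coe_inv_specialUnitaryGroup, star_diagStar, hx,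
    hy, diagStar_mul_antidiagStar_mul_diagStar_star, hc]
  congr 1
  linear_combination b * ha.mul_conj
end
end

section
/- Let V be the subgroup of SO(3) consisting of the four diagonal matrices with diagonal entries ±1 and determinant 1 (a Klein four-group). Then the centralizer of V in SO(3) equals V, and the normalizer of V in SO(3) is a group of order 24 isomorphic to the symmetric group Σ₄ on four letters. -/
open Matrix Complex

noncomputable section

/-- `SO(3)`, the special orthogonal group of `3 × 3` real matrices. -/
abbrev SO3 := Matrix.specialOrthogonalGroup (Fin 3) ℝ

/-!
The four vertices `(1,1,1), (1,-1,-1), (-1,1,-1), (-1,-1,1)` of a regular tetrahedron inscribed in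
the cube `[-1,1]³` span `ℝ³` and sum to zero, so every permutation `σ` of them is induced by a
unique orthogonal map `M σ`, and `σ ↦ det (M σ) • M σ` embeds `Σ₄` into `SO(3)`. The double
transpositions, a normal subgroup of `Σ₄`, go to the three non-trivial elements of `V`, so the
image normalizes `V`.

A rotation commuting with `diag(1,-1,-1)` and `diag(-1,1,-1)` is diagonal, hence lies in `V`: so
`C(V) = V`. Conjugation gives `N(V) → Aut(V)` with kernel `C(V)`, and an automorphism of `V`
permutes its three non-trivial elements, so `|N(V)| ≤ 4 · 3! = 24 = |Σ₄|` and the image of `Σ₄`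
is all of `N(V)`.
-/

open Equiv

open Nat in
theorem MulAut.card_le_factorial {G : Type*} [Group G] [Finite G] :
    Nat.card (MulAut G) ≤ (Nat.card G - 1)! := by
  classical
  have := Fintype.ofFinite G
  let restrict : MulAut G → Perm {g : G // g ≠ 1} := fun e =>
    e.toEquiv.subtypeEquiv fun _ => (map_ne_one_iff e e.injective).symm
  have restrict_injective : Function.Injective restrict := by
    intro e e' h
    ext g
    by_cases hg : g = 1
    · simp [hg]
    · exact congrArg Subtype.val (Equiv.ext_iff.mp h ⟨g, hg⟩)
  calc Nat.card (MulAut G) ≤ Nat.card (Perm {g : G // g ≠ 1}) :=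
        Nat.card_le_card_of_injective restrict restrict_injective
    _ = (Nat.card G - 1)! := by
        rw [Nat.card_perm, Nat.card_eq_fintype_card, Nat.card_eq_fintype_card,
          Fintype.card_subtype_compl, Fintype.card_subtype_eq]

namespace Subgroup

variable {G : Type*} [Group G] (H : Subgroup G)

theorem card_normalizer_eq_card_centralizer_mul :
    Nat.card (normalizer (H : Set G)) =
      Nat.card (centralizer (H : Set G)) * Nat.card H.normalizerMonoidHom.range := by
  rw [card_eq_card_quotient_mul_card_subgroup H.normalizerMonoidHom.ker, mul_comm,
    Nat.card_congr (QuotientGroup.quotientKerEquivRange _).toEquiv, normalizerMonoidHom_ker,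
    Nat.card_congr (subgroupOfEquivOfLe (centralizer_le_normalizer _)).toEquiv]

open Nat in
theorem card_normalizer_le [Finite H] :
    Nat.card (normalizer (H : Set G)) ≤
      Nat.card (centralizer (H : Set G)) * (Nat.card H - 1)! := by
  rw [card_normalizer_eq_card_centralizer_mul]
  gcongr
  exact (Nat.card_le_card_of_injective _ Subtype.val_injective).trans MulAut.card_le_factorial

theorem finite_normalizer [Finite H] [Finite (centralizer (H : Set G))] :
    Finite (normalizer (H : Set G)) := by
  apply Nat.finite_of_card_ne_zero
  rw [card_normalizer_eq_card_centralizer_mul]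
  exact Nat.mul_ne_zero Nat.card_pos.ne' Nat.card_pos.ne'

end Subgroup

namespace Matrix

variable {n : Type*} [DecidableEq n] [Fintype n]

theorem apply_eq_zero_of_commute_diagonal {R : Type*} [CommRing R] [NoZeroDivisors R]
    {d : n → R} {M : Matrix n n R} (h : Commute (diagonal d) M) {i j : n} (hij : d i ≠ d j) :
    M i j = 0 := by
  have hij_entry := congrFun (congrFun h.eq i) j
  rw [diagonal_mul, mul_diagonal, ← sub_eq_zero, mul_comm (M i j), ← sub_mul] at hij_entry
  exact (mul_eq_zero.mp hij_entry).resolve_left (sub_ne_zero.mpr hij)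

theorem det_mul_self_of_mem_orthogonalGroup {g : Matrix n n ℝ}
    (hg : g ∈ orthogonalGroup n ℝ) : g.det * g.det = 1 := by
  nth_rw 1 [← det_transpose g]
  rw [← det_mul, (mem_orthogonalGroup_iff' n ℝ).mp hg, det_one]

theorem det_smul_mem_specialOrthogonalGroup (hn : Odd (Fintype.card n)) {g : Matrix n n ℝ}
    (hg : g ∈ orthogonalGroup n ℝ) : g.det • g ∈ specialOrthogonalGroup n ℝ := by
  have hsq := det_mul_self_of_mem_orthogonalGroup hg
  obtain ⟨k, hk⟩ := hn
  rw [mem_specialOrthogonalGroup_iff, mem_orthogonalGroup_iff']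
  constructor
  · rw [transpose_smul, smul_mul_smul_comm, hsq, one_smul, (mem_orthogonalGroup_iff' n ℝ).mp hg]
  · rw [det_smul, hk, pow_succ, mul_assoc, pow_mul, sq, hsq, one_pow, one_mul]

def orthogonalGroup.detSMulHom (hn : Odd (Fintype.card n)) :
    orthogonalGroup n ℝ →* specialOrthogonalGroup n ℝ where
  toFun g := ⟨g.1.det • g.1, det_smul_mem_specialOrthogonalGroup hn g.2⟩
  map_one' := by ext1; simp
  map_mul' g h := by ext1; simp [det_mul, smul_smul, mul_comm]

theorem diagonal_eq_of_mem_specialOrthogonalGroup_fin_three {s : Fin 3 → ℝ}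
    (h : diagonal s ∈ specialOrthogonalGroup (Fin 3) ℝ) :
    diagonal s = !![1, 0, 0; 0, 1, 0; 0, 0, 1] ∨ diagonal s = !![1, 0, 0; 0, -1, 0; 0, 0, -1] ∨
      diagonal s = !![-1, 0, 0; 0, 1, 0; 0, 0, -1] ∨
      diagonal s = !![-1, 0, 0; 0, -1, 0; 0, 0, 1] := by
  obtain ⟨horth, hdet⟩ := h
  have hsq (i : Fin 3) : s i * s i = 1 := by
    simpa using congrFun (congrFun ((mem_orthogonalGroup_iff' _ ℝ).mp horth) i) i
  replace hdet : s 0 * s 1 * s 2 = 1 := by simpa [Fin.prod_univ_three] using hdet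
  rw [diagonal_fin_three]
  rcases mul_self_eq_one_iff.mp (hsq 0) with h0 | h0 <;>
    rcases mul_self_eq_one_iff.mp (hsq 1) with h1 | h1 <;>
    rcases mul_self_eq_one_iff.mp (hsq 2) with h2 | h2 <;>
    norm_num [h0, h1, h2] at hdet <;> norm_num [h0, h1, h2]

end Matrix

namespace Equiv.Perm

def kleinFour : Subgroup (Perm (Fin 4)) where
  carrier := ↑({1, swap 0 1 * swap 2 3, swap 0 2 * swap 1 3, swap 0 3 * swap 1 2} :
    Finset (Perm (Fin 4)))
  mul_mem' := by decide
  one_mem' := by decide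
  inv_mem' := by decide

theorem mem_kleinFour {σ : Perm (Fin 4)} :
    σ ∈ kleinFour ↔
      σ ∈ ({1, swap 0 1 * swap 2 3, swap 0 2 * swap 1 3, swap 0 3 * swap 1 2} :
        Finset (Perm (Fin 4))) :=
  Iff.rfl

instance : kleinFour.Normal := ⟨by simp only [mem_kleinFour]; decide⟩

theorem kleinFour_mul_comm {a b : Perm (Fin 4)} (ha : a ∈ kleinFour) (hb : b ∈ kleinFour) :
    a * b = b * a := by
  revert a b
  simp only [mem_kleinFour]
  decide

theorem card_kleinFour : Nat.card kleinFour = 4 := by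
  rw [← SetLike.coe_sort_coe]
  simp [kleinFour]
  decide

end Equiv.Perm

namespace Tetrahedron

def vertices : Matrix (Fin 3) (Fin 4) ℝ := !![1, 1, -1, -1; 1, -1, 1, -1; 1, -1, -1, 1]

local notation "P" => (permMatrixHom : Perm (Fin 4) →* Matrix (Fin 4) (Fin 4) ℝ)
local notation "J" => (of fun _ _ => 1 : Matrix (Fin 4) (Fin 4) ℝ)

theorem vertices_mul_transpose : vertices * verticesᵀ = (4 : ℝ) • 1 := by
  ext i j
  fin_cases i <;> fin_cases j <;> simp [vertices, Matrix.mul_apply, Fin.sum_univ_four] <;> norm_num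

theorem transpose_mul_vertices : verticesᵀ * vertices = (4 : ℝ) • 1 - J := by
  ext i j
  fin_cases i <;> fin_cases j <;> simp [vertices, Matrix.mul_apply, Fin.sum_univ_three] <;> norm_num

theorem vertices_mul_ones : vertices * J = 0 := by
  ext i j
  fin_cases i <;> simp [vertices, Matrix.mul_apply, Fin.sum_univ_four]

theorem mul_permMatrixHom_apply {m : Type*} (B : Matrix m (Fin 4) ℝ) (σ : Perm (Fin 4))
    (j : m) (i : Fin 4) : (B * P σ) j i = B j (σ i) := by
  simp [PEquiv.mul_toMatrix_toPEquiv, Perm.inv_def]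

theorem permMatrixHom_mul_ones (σ : Perm (Fin 4)) : P σ * J = J := by
  simp [PEquiv.toMatrix_toPEquiv_mul]
  rfl

def linearMap (σ : Perm (Fin 4)) : Matrix (Fin 3) (Fin 3) ℝ :=
  (4⁻¹ : ℝ) • (vertices * P σ * verticesᵀ)

theorem linearMap_mul_vertices (σ : Perm (Fin 4)) :
    linearMap σ * vertices = vertices * P σ := by
  rw [linearMap, smul_mul, Matrix.mul_assoc, transpose_mul_vertices, Matrix.mul_sub,
    Matrix.mul_smul, Matrix.mul_one, Matrix.mul_assoc, permMatrixHom_mul_ones, vertices_mul_ones,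
    sub_zero, smul_smul]
  norm_num

theorem linearMap_eq_of_mul_vertices {σ : Perm (Fin 4)} {D : Matrix (Fin 3) (Fin 3) ℝ}
    (h : D * vertices = vertices * P σ) : linearMap σ = D := by
  rw [linearMap, ← h, Matrix.mul_assoc, vertices_mul_transpose, Matrix.mul_smul, smul_smul]
  norm_num

def linearMapHom : Perm (Fin 4) →* Matrix (Fin 3) (Fin 3) ℝ where
  toFun := linearMap
  map_one' := linearMap_eq_of_mul_vertices (by simp)
  map_mul' σ τ := linearMap_eq_of_mul_vertices <| by
    rw [Matrix.mul_assoc, linearMap_mul_vertices, ← Matrix.mul_assoc, linearMap_mul_vertices,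
      Matrix.mul_assoc, map_mul]

theorem linearMap_mem_orthogonalGroup (σ : Perm (Fin 4)) :
    linearMap σ ∈ orthogonalGroup (Fin 3) ℝ := by
  have htranspose : (linearMap σ)ᵀ = linearMap σ⁻¹ := by
    simp [linearMap, transpose_smul, Matrix.mul_assoc]
  rw [mem_orthogonalGroup_iff', htranspose]
  exact (map_mul linearMapHom σ⁻¹ σ).symm.trans (by simp)

def rotationHom : Perm (Fin 4) →* SO3 :=
  (orthogonalGroup.detSMulHom (by decide)).comp
    (linearMapHom.codRestrict _ linearMap_mem_orthogonalGroup)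

theorem coe_rotationHom (σ : Perm (Fin 4)) :
    (rotationHom σ : Matrix (Fin 3) (Fin 3) ℝ) = (linearMap σ).det • linearMap σ :=
  rfl

theorem coe_rotationHom_eq_of_mul_vertices {σ : Perm (Fin 4)} {D : Matrix (Fin 3) (Fin 3) ℝ}
    (h : D * vertices = vertices * P σ) (hD : D.det = 1) :
    (rotationHom σ : Matrix (Fin 3) (Fin 3) ℝ) = D := by
  rw [coe_rotationHom, linearMap_eq_of_mul_vertices h, hD, one_smul]

theorem rotationHom_injective : Function.Injective rotationHom := by
  refine (injective_iff_map_eq_one rotationHom).mpr fun σ hσ => ?_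
  set c := (linearMap σ).det
  have hc : c * c = 1 := det_mul_self_of_mem_orthogonalGroup (linearMap_mem_orthogonalGroup σ)
  have hcM : c • linearMap σ = 1 := congrArg Subtype.val hσ
  have hM : linearMap σ = c • 1 := by rw [← hcM, smul_smul, hc, one_smul]
  -- vertex `σ i` would be `c` times vertex `i`, against the Gram matrix `4 • 1 - J`
  have hgram : verticesᵀ * vertices * P σ = c • (verticesᵀ * vertices) := by
    rw [Matrix.mul_assoc, ← linearMap_mul_vertices, hM, smul_mul, Matrix.one_mul,
      Matrix.mul_smul]
  rw [transpose_mul_vertices] at hgram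
  refine Equiv.ext fun i => by_contra fun hne => ?_
  have hi := congrFun (congrFun hgram i) i
  rw [mul_permMatrixHom_apply] at hi
  simp [one_apply, Ne.symm (show σ i ≠ i from hne)] at hi
  nlinarith

theorem card_range_rotationHom : Nat.card rotationHom.range = 24 := by
  rw [← Nat.card_congr (MonoidHom.ofInjective rotationHom_injective).toEquiv, Nat.card_perm,
    Nat.card_fin]
  rfl

theorem card_map_rotationHom_kleinFour : Nat.card (Perm.kleinFour.map rotationHom) = 4 := by
  rw [Subgroup.card_map_of_injective rotationHom_injective, Perm.card_kleinFour]

theorem range_rotationHom_le_normalizer :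
    rotationHom.range ≤ Subgroup.normalizer (Perm.kleinFour.map rotationHom : Set SO3) := by
  rw [MonoidHom.range_eq_map, ← Subgroup.normalizer_eq_top (H := Perm.kleinFour)]
  exact Subgroup.le_normalizer_map rotationHom

theorem coe_rotationHom_eq_diagonal {σ : Perm (Fin 4)} {d : Fin 3 → ℝ}
    (h : ∀ j i, d j * vertices j i = vertices j (σ i)) (hd : d 0 * d 1 * d 2 = 1) :
    (rotationHom σ : Matrix (Fin 3) (Fin 3) ℝ) = diagonal d :=
  coe_rotationHom_eq_of_mul_vertices (by ext j i; rw [diagonal_mul, mul_permMatrixHom_apply, h])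
    (by rw [det_diagonal, Fin.prod_univ_three, hd])

theorem coe_rotationHom_swap01_swap23 :
    (rotationHom (swap 0 1 * swap 2 3) : Matrix (Fin 3) (Fin 3) ℝ) = diagonal ![1, -1, -1] :=
  coe_rotationHom_eq_diagonal
    (fun j i => by fin_cases j <;> fin_cases i <;> simp [vertices, swap_apply_def]) (by simp)

theorem coe_rotationHom_swap02_swap13 :
    (rotationHom (swap 0 2 * swap 1 3) : Matrix (Fin 3) (Fin 3) ℝ) = diagonal ![-1, 1, -1] :=
  coe_rotationHom_eq_diagonal
    (fun j i => by fin_cases j <;> fin_cases i <;> simp [vertices, swap_apply_def]) (by simp)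

theorem coe_rotationHom_swap03_swap12 :
    (rotationHom (swap 0 3 * swap 1 2) : Matrix (Fin 3) (Fin 3) ℝ) = diagonal ![-1, -1, 1] :=
  coe_rotationHom_eq_diagonal
    (fun j i => by fin_cases j <;> fin_cases i <;> simp [vertices, swap_apply_def]) (by simp)

theorem mem_map_rotationHom_kleinFour {x : SO3} :
    x ∈ Perm.kleinFour.map rotationHom ↔
      (x : Matrix (Fin 3) (Fin 3) ℝ) = !![1, 0, 0; 0, 1, 0; 0, 0, 1] ∨
      (x : Matrix (Fin 3) (Fin 3) ℝ) = !![1, 0, 0; 0, -1, 0; 0, 0, -1] ∨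
      (x : Matrix (Fin 3) (Fin 3) ℝ) = !![-1, 0, 0; 0, 1, 0; 0, 0, -1] ∨
      (x : Matrix (Fin 3) (Fin 3) ℝ) = !![-1, 0, 0; 0, -1, 0; 0, 0, 1] := by
  simp only [Subgroup.mem_map, Perm.mem_kleinFour, Finset.mem_insert, Finset.mem_singleton,
    exists_eq_or_imp, exists_eq_left, Subtype.ext_iff, map_one, OneMemClass.coe_one,
    coe_rotationHom_swap01_swap23, coe_rotationHom_swap02_swap13, coe_rotationHom_swap03_swap12,
    diagonal_vec3, one_fin_three, eq_comm]

theorem centralizer_map_rotationHom_kleinFour :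
    Subgroup.centralizer (Perm.kleinFour.map rotationHom : Set SO3) =
      Perm.kleinFour.map rotationHom := by
  refine le_antisymm (fun x hx => ?_) ?_
  · have hcomm {σ : Perm (Fin 4)} {d : Fin 3 → ℝ} (hσ : σ ∈ Perm.kleinFour)
        (hd : (rotationHom σ : Matrix (Fin 3) (Fin 3) ℝ) = diagonal d) :
        Commute (diagonal d) (x : Matrix (Fin 3) (Fin 3) ℝ) := by
      rw [← hd]
      exact congrArg Subtype.val (Subgroup.mem_centralizer_iff.mp hx _ ⟨σ, hσ, rfl⟩)
    have h₁ := hcomm (by rw [Perm.mem_kleinFour]; decide) coe_rotationHom_swap01_swap23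
    have h₂ := hcomm (by rw [Perm.mem_kleinFour]; decide) coe_rotationHom_swap02_swap13
    have hdiag : (x : Matrix (Fin 3) (Fin 3) ℝ).IsDiag := by
      intro i j hij
      by_contra hx
      have e₁ := not_imp_comm.mp (apply_eq_zero_of_commute_diagonal h₁) hx
      have e₂ := not_imp_comm.mp (apply_eq_zero_of_commute_diagonal h₂) hx
      fin_cases i <;> fin_cases j <;>
        first | exact hij rfl | (norm_num at e₁; done) | norm_num at e₂
    have hdiag_mem :
        diagonal (x : Matrix (Fin 3) (Fin 3) ℝ).diag ∈ specialOrthogonalGroup (Fin 3) ℝ := by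
      rw [hdiag.diagonal_diag]
      exact x.2
    rw [mem_map_rotationHom_kleinFour, ← hdiag.diagonal_diag]
    exact diagonal_eq_of_mem_specialOrthogonalGroup_fin_three hdiag_mem
  · rintro _ ⟨a, ha, rfl⟩
    rw [Subgroup.mem_centralizer_iff]
    rintro _ ⟨b, hb, rfl⟩
    rw [← map_mul, ← map_mul, Perm.kleinFour_mul_comm hb ha]

end Tetrahedron

open Tetrahedron

/-- For the Klein four-subgroup `V` of `SO(3)` consisting of the diagonal matrices with
entries `±1` and determinant `1`, the centralizer of `V` in `SO(3)` equals `V`, and the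
normalizer of `V` in `SO(3)` has order `24` and is isomorphic to `Σ₄`. -/
theorem klein_four_in_so3 (V : Subgroup SO3)
    (hV : (V : Set SO3) = {x : SO3 |
      (x : Matrix (Fin 3) (Fin 3) ℝ) = !![1, 0, 0; 0, 1, 0; 0, 0, 1] ∨
      (x : Matrix (Fin 3) (Fin 3) ℝ) = !![1, 0, 0; 0, -1, 0; 0, 0, -1] ∨
      (x : Matrix (Fin 3) (Fin 3) ℝ) = !![-1, 0, 0; 0, 1, 0; 0, 0, -1] ∨
      (x : Matrix (Fin 3) (Fin 3) ℝ) = !![-1, 0, 0; 0, -1, 0; 0, 0, 1]}) :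
    Subgroup.centralizer (V : Set SO3) = V ∧
    Nat.card ↥(Subgroup.normalizer (V : Set SO3)) = 24 ∧
    Nonempty (↥(Subgroup.normalizer (V : Set SO3)) ≃* Equiv.Perm (Fin 4)) := by
  obtain rfl : V = Perm.kleinFour.map rotationHom :=
    SetLike.coe_injective (hV.trans (Set.ext fun _ => mem_map_rotationHom_kleinFour.symm))
  have hcent := centralizer_map_rotationHom_kleinFour
  have : Finite (Perm.kleinFour.map rotationHom) :=
    Nat.finite_of_card_ne_zero (by rw [card_map_rotationHom_kleinFour]; norm_num)
  have : Finite (Subgroup.centralizer (Perm.kleinFour.map rotationHom : Set SO3)) := by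
    rw [hcent]; infer_instance
  have := Subgroup.finite_normalizer (Perm.kleinFour.map rotationHom)
  have hrange :
      rotationHom.range = Subgroup.normalizer (Perm.kleinFour.map rotationHom : Set SO3) := by
    refine Subgroup.eq_of_le_of_card_ge range_rotationHom_le_normalizer ?_
    calc Nat.card (Subgroup.normalizer (Perm.kleinFour.map rotationHom : Set SO3))
        ≤ 4 * Nat.factorial (4 - 1) := by
          simpa only [hcent, card_map_rotationHom_kleinFour] using
            Subgroup.card_normalizer_le (Perm.kleinFour.map rotationHom)
      _ = Nat.card rotationHom.range := by rw [card_range_rotationHom]; rfl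
  refine ⟨hcent, by rw [← hrange, card_range_rotationHom], ⟨?_⟩⟩
  exact (MulEquiv.subgroupCongr hrange.symm).trans
    (MonoidHom.ofInjective rotationHom_injective).symm
end
end
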